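/- arXiv:2007.02697 — 2 statements merged into one kernel-verified Lean document; each statement's English description precedes it below -/
import Mathlib

section
/- For every ε > 0 there exists N such that for all integers n ≥ N, the length ι(n) of the shortest addition chain producing n satisfies ι(n) ≤ log₂(n) + (1 + ε)·log₂(n)/log₂(log₂(n)). -/
/-- `IsAddChainWith k s r n` says that `s 1 = 1, s 2 = 2, …, s k = n` is an
addition chain producing `n`, with regulators `r`: every term `s i` with
`2 ≤ i ≤ k` satisfies `s i = s (i-1) + r i`, where the regulator `r i` equals
some earlier term `s j` with `1 ≤ j < i`.  The length of the chain is `k - 1`. -/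
def IsAddChainWith (k : ℕ) (s r : ℕ → ℕ) (n : ℕ) : Prop :=
  2 ≤ k ∧ s 1 = 1 ∧ s 2 = 2 ∧ s k = n ∧
    ∀ i, 2 ≤ i → i ≤ k → s i = s (i - 1) + r i ∧ ∃ j, 1 ≤ j ∧ j < i ∧ r i = s j
/-- `minChainLength n` is the length `ι(n)` of the shortest addition chain
producing `n`. -/
noncomputable def minChainLength (n : ℕ) : ℕ :=
  sInf {d : ℕ | ∃ (k : ℕ) (s r : ℕ → ℕ), IsAddChainWith k s r n ∧ d = k - 1}

/-!
Brauer's `2^m`-ary method. Start the chain with `1, 2, …, 2^m`, which costs `2^m - 1` steps and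
makes every `m`-bit digit available as a regulator. Passing from `q` to `2^m q + d` then costs `m`
doublings and one addition, so every `n ≥ 2^m` has a chain of length at most
`2^m + log₂ n + log₂ n / m`. Taking `m ≈ log₂ log₂ n / (1 + ε/2)` makes
`2^m = o(log₂ n / log₂ log₂ n)` and `log₂ n / m ≤ (1 + ε/2) log₂ n / log₂ log₂ n`.
-/

section Chains

variable {a k n K : ℕ} {s r : ℕ → ℕ}

theorem IsAddChainWith.snoc (h : IsAddChainWith k s r n) {j : ℕ} (hj : 1 ≤ j)
    (hjk : j ≤ k) :
    IsAddChainWith (k + 1) (Function.update s (k + 1) (n + s j))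
      (Function.update r (k + 1) (s j)) (n + s j) := by
  obtain ⟨hk, h1, h2, hn, hstep⟩ := h
  refine ⟨by omega, ?_, ?_, by simp, fun i hi hik => ?_⟩
  · rwa [Function.update_of_ne (by omega)]
  · rwa [Function.update_of_ne (by omega)]
  rcases (show i ≤ k ∨ i = k + 1 by omega) with hik | rfl
  · obtain ⟨hsi, l, hl, hli, hrl⟩ := hstep i hi hik
    simp only [Function.update_of_ne (show i ≠ k + 1 by omega),
      Function.update_of_ne (show i - 1 ≠ k + 1 by omega)]
    exact ⟨hsi, l, hl, hli, by rw [Function.update_of_ne (by omega), hrl]⟩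
  · refine ⟨by simp [hn], j, hj, by omega, ?_⟩
    rw [Function.update_self, Function.update_of_ne (by omega)]

/-- `K` bounds the number of terms, so the chain has length at most `K - 1`. -/
def HasChainWithPrefix (a K n : ℕ) : Prop :=
  ∃ k s r, IsAddChainWith k s r n ∧ a ≤ k ∧ k ≤ K ∧ ∀ i, 1 ≤ i → i ≤ a → s i = i

namespace HasChainWithPrefix

theorem mono {K' : ℕ} (h : HasChainWithPrefix a K n) (hK : K ≤ K') :
    HasChainWithPrefix a K' n :=
  let ⟨k, s, r, hc, hak, hkK, hs⟩ := h
  ⟨k, s, r, hc, hak, hkK.trans hK, hs⟩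

theorem minChainLength_le (h : HasChainWithPrefix a K n) : minChainLength n ≤ K - 1 := by
  obtain ⟨k, s, r, hc, -, hkK, -⟩ := h
  have hk : minChainLength n ≤ k - 1 := Nat.sInf_le ⟨k, s, r, hc, rfl⟩
  exact hk.trans (Nat.sub_le_sub_right hkK 1)

theorem self (ha : 2 ≤ a) : HasChainWithPrefix a a a := by
  refine ⟨a, id, fun _ => 1, ⟨ha, rfl, rfl, rfl, fun i hi _ => ?_⟩, le_rfl, le_rfl,
    fun _ _ _ => rfl⟩
  exact ⟨by simp; omega, 1, le_rfl, hi, rfl⟩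

theorem snoc_term (hc : IsAddChainWith k s r n) (hak : a ≤ k) (hkK : k ≤ K)
    (hs : ∀ i, 1 ≤ i → i ≤ a → s i = i) {j : ℕ} (hj : 1 ≤ j) (hjk : j ≤ k) :
    HasChainWithPrefix a (K + 1) (n + s j) :=
  ⟨k + 1, _, _, hc.snoc hj hjk, by omega, by omega, fun i hi hia => by
    rw [Function.update_of_ne (by omega), hs i hi hia]⟩

theorem add_of_le (h : HasChainWithPrefix a K n) {d : ℕ} (hd : d ≤ a) :
    HasChainWithPrefix a (K + 1) (n + d) := by
  rcases Nat.eq_zero_or_pos d with rfl | hd0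
  · exact h.mono K.le_succ
  · obtain ⟨k, s, r, hc, hak, hkK, hs⟩ := h
    simpa only [hs d hd0 hd] using snoc_term hc hak hkK hs hd0 (hd.trans hak)

theorem two_mul (h : HasChainWithPrefix a K n) : HasChainWithPrefix a (K + 1) (2 * n) := by
  obtain ⟨k, s, r, hc, hak, hkK, hs⟩ := h
  have hk : s k = n := hc.2.2.2.1
  simpa only [hk, _root_.two_mul] using snoc_term hc hak hkK hs (by have := hc.1; omega) le_rfl

theorem two_pow_mul_add (h : HasChainWithPrefix a K n) (e : ℕ) {d : ℕ} (hd : d ≤ a) :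
    HasChainWithPrefix a (K + e + 1) (2 ^ e * n + d) := by
  suffices hpow : HasChainWithPrefix a (K + e) (2 ^ e * n) from hpow.add_of_le hd
  induction e with
  | zero => simpa using h
  | succ e ih => simpa only [pow_succ', mul_assoc, ← add_assoc] using ih.two_mul

end HasChainWithPrefix

end Chains

theorem hasChainWithPrefix_of_two_pow_le {m : ℕ} (hm : 1 ≤ m) {n : ℕ} (hn : 2 ^ m ≤ n) :
    HasChainWithPrefix (2 ^ m) (2 ^ m + 1 + Nat.log 2 n + Nat.log 2 n / m) n := by
  induction n using Nat.strong_induction_on with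
  | _ n ih =>
  set B := Nat.log 2 n
  have hn0 : n ≠ 0 := ((Nat.two_pow_pos m).trans_le hn).ne'
  have hmB : m ≤ B := (Nat.le_log_iff_pow_le one_lt_two hn0).mpr hn
  have hlog_div (e : ℕ) : Nat.log 2 (n / 2 ^ e) = B - e := Nat.log_div_base_pow 2 n e
  have hle_div {e : ℕ} (he : e ≤ B - m) : 2 ^ m ≤ n / 2 ^ e := by
    rw [Nat.le_div_iff_mul_le (Nat.two_pow_pos e), ← pow_add]
    exact (Nat.pow_le_pow_right two_pos (by omega)).trans (Nat.pow_log_le_self 2 hn0)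
  have hsplit {e K : ℕ} (he : e ≤ m) (h : HasChainWithPrefix (2 ^ m) K (n / 2 ^ e)) :
      HasChainWithPrefix (2 ^ m) (K + e + 1) n := by
    have hd : n % 2 ^ e ≤ 2 ^ m :=
      (Nat.mod_lt n (Nat.two_pow_pos e)).le.trans (Nat.pow_le_pow_right two_pos he)
    simpa only [Nat.div_add_mod] using h.two_pow_mul_add e hd
  rcases lt_or_ge B (2 * m) with hB | hB
  · -- the `B - m < m` bits below the leading `m + 1` form a single, short block
    set q := n / 2 ^ (B - m)
    have hmq : 2 ^ m ≤ q := hle_div le_rfl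
    have hqm : q - 2 ^ m ≤ 2 ^ m := by
      have := Nat.lt_pow_succ_log_self one_lt_two q
      rw [hlog_div, Nat.sub_sub_self hmB, pow_succ] at this
      omega
    have hq : HasChainWithPrefix (2 ^ m) (2 ^ m + 1) q := by
      simpa only [Nat.add_sub_cancel' hmq] using
        (HasChainWithPrefix.self (Nat.le_self_pow (by omega) 2)).add_of_le hqm
    refine (hsplit (by omega) hq).mono ?_
    have : 1 ≤ B / m := (Nat.one_le_div_iff (by omega)).mpr hmB
    omega
  · set q := n / 2 ^ m
    have hqn : q < n := Nat.div_lt_self (by omega) (Nat.one_lt_two_pow (by omega))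
    have hdiv : B / m = (B - m) / m + 1 := by
      rw [← Nat.add_div_right _ (by omega : 0 < m), Nat.sub_add_cancel hmB]
    refine (hsplit le_rfl (ih q hqn (hle_div (by omega)))).mono (le_of_eq ?_)
    rw [hlog_div, hdiv]
    omega

open Real Filter Asymptotics

theorem minChainLength_le_of_two_pow_le {m n : ℕ} (hm : 1 ≤ m) (hn : 2 ^ m ≤ n) :
    (minChainLength n : ℝ) ≤ 2 ^ m + logb 2 n + logb 2 n / m := by
  have hchain : minChainLength n ≤ 2 ^ m + Nat.log 2 n + Nat.log 2 n / m :=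
    (hasChainWithPrefix_of_two_pow_le hm hn).minChainLength_le.trans
      (Nat.sub_le_iff_le_add.mpr (by omega))
  have hlog : (Nat.log 2 n : ℝ) ≤ logb 2 n := by exact_mod_cast natLog_le_logb n 2
  calc (minChainLength n : ℝ)
      ≤ ((2 ^ m + Nat.log 2 n + Nat.log 2 n / m : ℕ) : ℝ) := by exact_mod_cast hchain
    _ ≤ 2 ^ m + Nat.log 2 n + (Nat.log 2 n : ℝ) / m := by
        push_cast; gcongr; exact Nat.cast_div_le
    _ ≤ 2 ^ m + logb 2 n + logb 2 n / m := by gcongr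

theorem eventually_exists_two_pow_add_div_le {ε : ℝ} (hε : 0 < ε) :
    ∀ᶠ x : ℝ in atTop, ∃ m : ℕ, 1 ≤ m ∧ (m : ℝ) ≤ x ∧
      2 ^ m + x / m ≤ (1 + ε) * x / logb 2 x := by
  -- `m = ⌈c log₂ x⌉` makes `x / m` at most `(1 + ε/2) x / log₂ x`, while `2 ^ m ≤ 2 x ^ c`
  -- is negligible against `x / log₂ x` because `c < 1`.
  set c := (1 + ε / 2)⁻¹
  have hc0 : 0 < c := by positivity
  have hc1 : c < 1 := inv_lt_one_of_one_lt₀ (by linarith)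
  have hlogb_rpow : logb 2 =o[atTop] fun x => x ^ (1 - c) :=
    ((isLittleO_log_rpow_atTop (by linarith)).const_mul_left (log 2)⁻¹).congr_left fun x => by
      rw [logb, div_eq_inv_mul]
  filter_upwards [hlogb_rpow.bound (by positivity : 0 < ε / 4),
    (isLittleO_logb_id_atTop (b := 2)).bound (half_pos one_pos),
    (tendsto_logb_atTop one_lt_two).eventually_gt_atTop 0, eventually_ge_atTop 2]
    with x hy_rpow hy_half hy0 hx2
  set y := logb 2 x
  have hx0 : 0 < x := by linarith
  rw [norm_of_nonneg hy0.le, norm_of_nonneg (rpow_nonneg hx0.le _)] at hy_rpow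
  rw [norm_of_nonneg hy0.le, id, norm_of_nonneg hx0.le] at hy_half
  set m := ⌈c * y⌉₊
  have hm_ge : c * y ≤ m := Nat.le_ceil _
  have hm_lt : (m : ℝ) < c * y + 1 := Nat.ceil_lt_add_one (by positivity)
  have hcy : c * y ≤ y := mul_le_of_le_one_left hy0.le hc1.le
  refine ⟨m, Nat.one_le_iff_ne_zero.mpr (Nat.ceil_pos.mpr (by positivity)).ne', by linarith, ?_⟩
  have h2m : (2 : ℝ) ^ m ≤ 2 * x ^ c :=
    calc (2 : ℝ) ^ m = 2 ^ (m : ℝ) := (rpow_natCast 2 m).symm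
      _ ≤ 2 ^ (c * y + 1) := rpow_le_rpow_of_exponent_le one_le_two hm_lt.le
      _ = 2 * (2 ^ y) ^ c := by
          rw [rpow_add two_pos, rpow_one, mul_comm, mul_comm c, rpow_mul zero_le_two]
      _ = 2 * x ^ c := by rw [rpow_logb two_pos (by norm_num) hx0]
  have hpow : (2 : ℝ) ^ m ≤ ε / 2 * x / y := by
    rw [le_div_iff₀ hy0]
    calc (2 : ℝ) ^ m * y ≤ 2 * x ^ c * (ε / 4 * x ^ (1 - c)) := by gcongr
      _ = ε / 2 * (x ^ c * x ^ (1 - c)) := by ring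
      _ = ε / 2 * x := by rw [← rpow_add hx0, add_sub_cancel, rpow_one]
  have hdiv : x / m ≤ (1 + ε / 2) * x / y :=
    calc x / m ≤ x / (c * y) := div_le_div_of_nonneg_left hx0.le (by positivity) hm_ge
      _ = (1 + ε / 2) * x / y := by rw [inv_mul_eq_div, div_div_eq_mul_div, mul_comm]
  calc (2 : ℝ) ^ m + x / m ≤ ε / 2 * x / y + (1 + ε / 2) * x / y := add_le_add hpow hdiv
    _ = (1 + ε) * x / y := by ring

/-- for every `ε > 0` there is `N` such that for all `n ≥ N`,
`ι(n) ≤ log₂ n + (1 + ε) · log₂ n / log₂ (log₂ n)`. -/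
theorem min_chain_length_upper_bound :
    ∀ ε : ℝ, 0 < ε → ∃ N : ℕ, ∀ n : ℕ, N ≤ n →
      (minChainLength n : ℝ) ≤
        Real.logb 2 n + (1 + ε) * Real.logb 2 n / Real.logb 2 (Real.logb 2 n) := by
  intro ε hε
  have hlogb : Tendsto (fun n : ℕ => logb 2 n) atTop atTop :=
    (tendsto_logb_atTop one_lt_two).comp tendsto_natCast_atTop_atTop
  obtain ⟨N, hN⟩ :=
    eventually_atTop.mp (hlogb.eventually (eventually_exists_two_pow_add_div_le hε))
  refine ⟨N, fun n hn => ?_⟩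
  obtain ⟨m, hm, hmn, hwindow⟩ := hN n hn
  have hlog : m ≤ Nat.log 2 n := by
    rw [← natFloor_logb_natCast]
    exact Nat.le_floor (by exact_mod_cast hmn)
  have h2m : 2 ^ m ≤ n := Nat.pow_le_of_le_log (by rintro rfl; simp at hlog; omega) hlog
  linarith [minChainLength_le_of_two_pow_le hm h2m]
end

section
/- No Ulam number beyond the first three is the sum of its two immediately preceding Ulam numbers: for every m > 3, U_m ≠ U_{m−1} + U_{m−2}. -/
/-- `ulamRepCount l m` is the number of representations of `m` as a sum of two
distinct elements of the list `l`. -/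
def ulamRepCount (l : List ℕ) (m : ℕ) : ℕ :=
  ((l.product l).filter (fun p => decide (p.1 < p.2 ∧ p.1 + p.2 = m))).length

open Classical in
/-- The smallest integer greater than the head of `l` having exactly one
representation as a sum of two distinct elements of `l` (and `0` if no such
integer exists). -/
noncomputable def nextUlam (l : List ℕ) : ℕ :=
  if h : ∃ m, l.headI < m ∧ ulamRepCount l m = 1 then Nat.find h else 0

/-- `ulamList n` is the list `[U_n, …, U_2, U_1]` of the first `n` Ulam numbers,
newest first: `U_1 = 1`, `U_2 = 2`, and `U_{n+1}` is the smallest integer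
greater than `U_n` with exactly one representation as a sum of two distinct
earlier Ulam numbers. -/
noncomputable def ulamList : ℕ → List ℕ
  | 0 => []
  | 1 => [1]
  | 2 => [2, 1]
  | n + 3 => nextUlam (ulamList (n + 2)) :: ulamList (n + 2)

/-- The `n`-th Ulam number (1-indexed): `ulam 1 = 1`, `ulam 2 = 2`, `ulam 3 = 3`, … -/
noncomputable def ulam (n : ℕ) : ℕ := (ulamList n).headI

/-!
The Ulam sequence is strictly increasing. For `m > 3`, the number `U_{m-1} + U_{m-3}` exceeds
`U_{m-1}` and is represented only as `U_{m-3} + U_{m-1}`: a sum not involving `U_{m-1}` is at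
most `U_{m-2} + U_{m-3}`, and one involving it fixes the other summand. Hence
`U_m ≤ U_{m-1} + U_{m-3} < U_{m-1} + U_{m-2}`.
-/

lemma ulamRepCount_cons_add_eq_one {a c : ℕ} {t : List ℕ} (hl : (a :: t).Pairwise (· > ·))
    (hc : c ∈ t) (hgap : ∀ p ∈ t, ∀ q ∈ t, p < q → p + q < a + c) :
    ulamRepCount (a :: t) (a + c) = 1 := by
  have hat : ∀ x ∈ t, a > x := (List.pairwise_cons.mp hl).1
  have hunique : ((a :: t).product (a :: t)).filter
        (fun p => decide (p.1 < p.2 ∧ p.1 + p.2 = a + c)) =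
      ((a :: t).product (a :: t)).filter (· == (c, a)) := by
    refine List.filter_congr fun ⟨p, q⟩ hpq => ?_
    obtain ⟨hp, hq⟩ := List.pair_mem_product.mp hpq
    rw [Bool.eq_iff_iff]
    simp only [decide_eq_true_eq, beq_iff_eq, Prod.mk.injEq]
    constructor
    · rintro ⟨hpq, hsum⟩
      rcases List.mem_cons.mp hq with rfl | hqt
      · omega
      rcases List.mem_cons.mp hp with rfl | hpt
      · exact absurd (hat q hqt) (by omega)
      · exact absurd (hgap p hpt q hqt hpq) (by omega)
    · rintro ⟨rfl, rfl⟩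
      exact ⟨hat p hc, Nat.add_comm _ _⟩
  rw [ulamRepCount, hunique, ← List.count_eq_length_filter]
  exact List.count_eq_one_of_mem (hl.nodup.product hl.nodup)
    (List.pair_mem_product.mpr ⟨List.mem_cons_of_mem _ hc, List.mem_cons_self⟩)

lemma ulamRepCount_add_second {a b : ℕ} {t : List ℕ} (hl : (a :: b :: t).Pairwise (· > ·)) :
    ulamRepCount (a :: b :: t) (a + b) = 1 := by
  refine ulamRepCount_cons_add_eq_one hl List.mem_cons_self fun p _ q hq hpq => ?_
  have hab : a > b := (List.pairwise_cons.mp hl).1 b List.mem_cons_self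
  have hqb : q ≤ b := by
    rcases List.mem_cons.mp hq with rfl | hq
    · exact le_rfl
    · exact ((List.pairwise_cons.mp (List.pairwise_cons.mp hl).2).1 q hq).le
  omega

lemma ulamRepCount_add_third {a b c : ℕ} {t : List ℕ}
    (hl : (a :: b :: c :: t).Pairwise (· > ·)) :
    ulamRepCount (a :: b :: c :: t) (a + c) = 1 := by
  have hbct := (List.pairwise_cons.mp hl).2
  have hab : a > b := (List.pairwise_cons.mp hl).1 b List.mem_cons_self
  have hb : ∀ x ∈ c :: t, b > x := (List.pairwise_cons.mp hbct).1
  have hc : ∀ x ∈ t, c > x := (List.pairwise_cons.mp (List.pairwise_cons.mp hbct).2).1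
  refine ulamRepCount_cons_add_eq_one hl (by simp) fun p hp q hq hpq => ?_
  -- `p < q` forces `p ≠ b`, so `p ≤ c`, while `q ≤ b < a`
  have hqb : q ≤ b := by
    rcases List.mem_cons.mp hq with rfl | hq
    · exact le_rfl
    · exact (hb q hq).le
  have hpc : p ≤ c := by
    rcases List.mem_cons.mp hp with rfl | hp
    · omega
    rcases List.mem_cons.mp hp with rfl | hp
    · exact le_rfl
    · exact (hc p hp).le
  omega

lemma nextUlam_spec {l : List ℕ} {m : ℕ} (hlt : l.headI < m) (hm : ulamRepCount l m = 1) :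
    l.headI < nextUlam l ∧ nextUlam l ≤ m := by
  have hex : ∃ m, l.headI < m ∧ ulamRepCount l m = 1 := ⟨m, hlt, hm⟩
  rw [nextUlam, dif_pos hex]
  exact ⟨(Nat.find_spec hex).1, Nat.find_le ⟨hlt, hm⟩⟩

lemma lt_nextUlam {a b : ℕ} {t : List ℕ} (hl : (a :: b :: t).Pairwise (· > ·)) (hb : 0 < b) :
    a < nextUlam (a :: b :: t) :=
  (nextUlam_spec (m := a + b) (by simpa using hb) (ulamRepCount_add_second hl)).1

lemma ulamList_succ (n : ℕ) : ulamList (n + 1) = ulam (n + 1) :: ulamList n := by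
  rcases n with _ | _ | n <;> rfl

lemma ulam_add_three (n : ℕ) : ulam (n + 3) = nextUlam (ulamList (n + 2)) := rfl

lemma ulamList_add_three (n : ℕ) :
    ulamList (n + 3) = ulam (n + 3) :: ulam (n + 2) :: ulam (n + 1) :: ulamList n := by
  rw [ulamList_succ, ulamList_succ, ulamList_succ]

lemma ulamList_pairwise : ∀ n, (ulamList n).Pairwise (· > ·)
  | 0 | 1 | 2 => by simp [ulamList]
  | 3 => by
    have h2 : (ulamList 2).Pairwise (· > ·) := ulamList_pairwise 2
    have hlt : 2 < ulam (2 + 1) := lt_nextUlam (b := 1) (t := []) h2 one_pos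
    rw [ulamList_succ]
    exact List.pairwise_cons.mpr ⟨fun x hx => by simp [ulamList] at hx; omega, h2⟩
  | n + 4 => by
    have ih := ulamList_pairwise (n + 3)
    rw [ulamList_add_three] at ih
    have hhead : ∀ x ∈ ulamList (n + 3), x ≤ ulam (n + 3) := by
      rw [ulamList_add_three]
      exact List.forall_mem_cons.mpr ⟨le_rfl, fun x hx => ((List.pairwise_cons.mp ih).1 x hx).le⟩
    have hb : ulam (n + 2) > ulam (n + 1) :=
      (List.pairwise_cons.mp (List.pairwise_cons.mp ih).2).1 _ List.mem_cons_self
    have hnext : ulam (n + 3) < ulam (n + 4) := by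
      rw [ulam_add_three (n + 1), ulamList_add_three]
      exact lt_nextUlam ih (by omega)
    rw [ulamList_succ]
    exact List.pairwise_cons.mpr ⟨fun x hx => (hhead x hx).trans_lt hnext,
      ulamList_pairwise (n + 3)⟩

lemma strictMono_ulam : StrictMono ulam := by
  refine strictMono_nat_of_lt_succ fun n => ?_
  rcases n with _ | n
  · exact Nat.one_pos -- `ulam 0 = [].headI = 0`
  · have hl := ulamList_pairwise (n + 2)
    rw [ulamList_succ, ulamList_succ] at hl
    exact (List.pairwise_cons.mp hl).1 _ List.mem_cons_self

/-- no Ulam number beyond the first three is the sum of its two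
immediately preceding Ulam numbers: for `m > 3`, `U_m ≠ U_{m-1} + U_{m-2}`. -/
theorem ulam_ne_sum_pred (m : ℕ) (hm : 3 < m) :
    ulam m ≠ ulam (m - 1) + ulam (m - 2) := by
  obtain ⟨n, rfl⟩ : ∃ n, m = n + 4 := ⟨m - 4, by omega⟩
  have hl := ulamList_pairwise (n + 3)
  rw [ulamList_add_three] at hl
  have hpos : ulam 0 < ulam (n + 1) := strictMono_ulam n.succ_pos
  have hlt : ulam (n + 1) < ulam (n + 2) := strictMono_ulam (Nat.lt_succ_self _)
  have hle : ulam (n + 4) ≤ ulam (n + 3) + ulam (n + 1) := by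
    rw [ulam_add_three (n + 1), ulamList_add_three]
    exact (nextUlam_spec (by rw [List.headI_cons]; omega) (ulamRepCount_add_third hl)).2
  rw [show n + 4 - 1 = n + 3 by omega, show n + 4 - 2 = n + 2 by omega]
  omega
end
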